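/- arXiv:1506.05734 — 2 statements merged into one kernel-verified Lean document; each statement's English description precedes it below -/
import Mathlib

section
/- For every integer s ≥ 1, the polynomial P_{2^s} + r_s/2 has exactly 2^s distinct real roots, all of which lie in the interval [0,1], and its set of roots is invariant under the map x ↦ 1 − x (i.e., the roots are symmetric about x = 1/2). -/
open Polynomial

noncomputable def r (γ : ℕ → ℝ) : ℕ → ℝ
  | 0 => 1
  | s + 1 => γ (s + 1) * (r γ s) ^ 2

noncomputable def P (γ : ℕ → ℝ) : ℕ → Polynomial ℝ
  | 0 => X - 1
  | s + 1 => P γ s * (P γ s + C (r γ s))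

lemma r_pos (γ : ℕ → ℝ) (hγ : ∀ s : ℕ, 0 < γ (s + 1) ∧ γ (s + 1) < 1 / 4) :
    ∀ s, 0 < r γ s
  | 0 => one_pos
  | s + 1 => mul_pos (hγ s).1 (pow_pos (r_pos γ hγ s) 2)

lemma P_monic_deg (γ : ℕ → ℝ) : ∀ s, (P γ s).Monic ∧ (P γ s).natDegree = 2 ^ s := by
  intro s
  induction s with
  | zero => constructor
            · simpa [P] using monic_X_sub_C (1 : ℝ)
            · show (X - 1 : ℝ[X]).natDegree = 1
              simpa using natDegree_X_sub_C (1 : ℝ)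
  | succ n ih =>
    obtain ⟨hm, hd⟩ := ih
    have hdegpos : (0 : WithBot ℕ) < (P γ n).degree := by
      rw [degree_eq_natDegree hm.ne_zero, hd]
      exact_mod_cast pow_pos (by norm_num : (0:ℕ) < 2) n
    have hm2 : (P γ n + C (r γ n)).Monic :=
      hm.add_of_left (lt_of_le_of_lt (degree_C_le) hdegpos)
    have hmul : (P γ (n + 1)).Monic := by
      rw [P]; exact hm.mul hm2
    refine ⟨hmul, ?_⟩
    have : (P γ (n+1)).natDegree = (P γ n).natDegree + (P γ n + C (r γ n)).natDegree := by
      rw [P]; exact hm.natDegree_mul hm2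
    rw [this, hd]
    have hd2 : (P γ n + C (r γ n)).natDegree = 2 ^ n := by
      rw [natDegree_add_C, hd]
    rw [hd2]; ring

lemma monic_shift (γ : ℕ → ℝ) (s : ℕ) (a : ℝ) : (P γ s + C a).Monic := by
  obtain ⟨hm, hd⟩ := P_monic_deg γ s
  have hdegpos : (0 : WithBot ℕ) < (P γ s).degree := by
    rw [degree_eq_natDegree hm.ne_zero, hd]
    exact_mod_cast pow_pos (by norm_num : (0:ℕ) < 2) s
  exact hm.add_of_left (lt_of_le_of_lt (degree_C_le) hdegpos)

lemma main_lemma (γ : ℕ → ℝ) (hγ : ∀ s : ℕ, 0 < γ (s + 1) ∧ γ (s + 1) < 1 / 4) :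
    ∀ s : ℕ, ∀ a : ℝ, 0 ≤ a → a ≤ r γ s →
      ((P γ s + C a).roots.toFinset.card = 2 ^ s ∧
       ∀ x : ℝ, (P γ s + C a).eval x = 0 → x ∈ Set.Icc (0 : ℝ) 1) := by
  intro s
  induction s with
  | zero =>
    intro a ha0 ha1
    have hr : r γ 0 = 1 := rfl
    rw [hr] at ha1
    have hP : P γ 0 + C a = X - C (1 - a) := by
      rw [P, map_sub, map_one]; ring
    constructor
    · rw [hP, roots_X_sub_C]
      simp
    · intro x hx
      rw [hP] at hx
      simp only [eval_sub, eval_X, eval_C] at hx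
      have : x = 1 - a := by linarith
      constructor <;> [linarith; linarith]
  | succ n ih =>
    intro a ha0 ha1
    have hrpos := r_pos γ hγ n
    have hrn1 : r γ (n + 1) = γ (n + 1) * (r γ n) ^ 2 := rfl
    have hγn := hγ n
    have hdisc : 0 < r γ n ^ 2 - 4 * a := by
      have : a ≤ γ (n + 1) * (r γ n) ^ 2 := by rw [← hrn1]; exact ha1
      nlinarith [pow_pos hrpos 2, hγn.1, hγn.2]
    set d := Real.sqrt (r γ n ^ 2 - 4 * a) with hd_def
    have hd_pos : 0 < d := Real.sqrt_pos.mpr hdisc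
    have hd_sq : d ^ 2 = r γ n ^ 2 - 4 * a := Real.sq_sqrt hdisc.le
    have hd_le : d ≤ r γ n := by
      nlinarith [hd_pos]
    set a₁ := (r γ n - d) / 2 with ha₁_def
    set a₂ := (r γ n + d) / 2 with ha₂_def
    have h1 : a₁ + a₂ = r γ n := by rw [ha₁_def, ha₂_def]; ring
    have h2 : a₁ * a₂ = a := by
      rw [ha₁_def, ha₂_def]; nlinarith [hd_sq]
    have hne : a₁ ≠ a₂ := by
      rw [ha₁_def, ha₂_def]; intro h; nlinarith
    have ha₁0 : 0 ≤ a₁ := by rw [ha₁_def]; linarith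
    have ha₁1 : a₁ ≤ r γ n := by rw [ha₁_def]; linarith
    have ha₂0 : 0 ≤ a₂ := by rw [ha₂_def]; linarith
    have ha₂1 : a₂ ≤ r γ n := by rw [ha₂_def]; linarith
    obtain ⟨c1, m1⟩ := ih a₁ ha₁0 ha₁1
    obtain ⟨c2, m2⟩ := ih a₂ ha₂0 ha₂1
    have key : P γ (n + 1) + C a = (P γ n + C a₁) * (P γ n + C a₂) := by
      rw [P, ← h2, ← h1, map_add, map_mul]; ring
    have hne1 : (P γ n + C a₁) ≠ 0 := (monic_shift γ n a₁).ne_zero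
    have hne2 : (P γ n + C a₂) ≠ 0 := (monic_shift γ n a₂).ne_zero
    have hroots : (P γ (n + 1) + C a).roots =
        (P γ n + C a₁).roots + (P γ n + C a₂).roots := by
      rw [key, roots_mul (mul_ne_zero hne1 hne2)]
    have hdisj : Disjoint (P γ n + C a₁).roots.toFinset (P γ n + C a₂).roots.toFinset := by
      rw [Finset.disjoint_left]
      intro x hx1 hx2
      rw [Multiset.mem_toFinset, mem_roots hne1] at hx1
      rw [Multiset.mem_toFinset, mem_roots hne2] at hx2
      have e1 : (P γ n).eval x + a₁ = 0 := by simpa using hx1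
      have e2 : (P γ n).eval x + a₂ = 0 := by simpa using hx2
      exact hne (by linarith)
    constructor
    · rw [hroots, Multiset.toFinset_add, Finset.card_union_of_disjoint hdisj, c1, c2]
      ring
    · intro x hx
      rw [key] at hx
      simp only [eval_mul] at hx
      rcases mul_eq_zero.mp hx with h | h
      · exact m1 x h
      · exact m2 x h

lemma P_symm (γ : ℕ → ℝ) : ∀ s : ℕ, 1 ≤ s → ∀ x : ℝ,
    (P γ s).eval (1 - x) = (P γ s).eval x := by
  intro s
  induction s with
  | zero => omega
  | succ n ih =>
    intro _ x
    rcases Nat.eq_zero_or_pos n with h | h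
    · subst h
      have hr : r γ 0 = 1 := rfl
      simp [P, hr]
      ring
    · simp only [P, eval_mul, eval_add, eval_C, ih h x]

theorem stmt_0 (γ : ℕ → ℝ) (hγ : ∀ s : ℕ, 0 < γ (s + 1) ∧ γ (s + 1) < 1 / 4)
    (s : ℕ) (hs : 1 ≤ s) :
    ((P γ s + C (r γ s / 2)).roots.toFinset.card = 2 ^ s) ∧
    (∀ x : ℝ, (P γ s + C (r γ s / 2)).eval x = 0 → x ∈ Set.Icc (0 : ℝ) 1) ∧
    (∀ x : ℝ, (P γ s + C (r γ s / 2)).eval x = 0 →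
      (P γ s + C (r γ s / 2)).eval (1 - x) = 0) := by
  have hr := r_pos γ hγ s
  obtain ⟨hc, hm⟩ := main_lemma γ hγ s (r γ s / 2) (by linarith) (by linarith)
  refine ⟨hc, hm, ?_⟩
  intro x hx
  simp only [eval_add, eval_C] at hx ⊢
  rw [P_symm γ s hs x]
  exact hx
end

section
/- For every s ≥ 0, the monic orthogonal polynomials with respect to μ satisfy the recursion Q_{2^{s+1}} = (Q_{2^s})² − (1 − 2γ_{s+1})·r_s²/4. -/
open Polynomial MeasureTheory Filter

/-- The integral `∫ f dν_s` of a function `f` against the normalized counting measure `ν_s`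
on the `2^s` (simple, real) zeros of `P_{2^s} + r_s/2`. -/
noncomputable def nuInt (γ : ℕ → ℝ) (s : ℕ) (f : ℝ → ℝ) : ℝ :=
  (((P γ s + C (r γ s / 2)).roots.map f).sum) / 2 ^ s

open Set

/-!
Put `T_k = P_{2^k} + r_k/2`. If `0 ≤ c ≤ r_{t+1}`, then `c = ab` with `a + b = r_t` and
`a, b ∈ [0, r_t]` (this is where `γ_{t+1} ≤ 1/4` enters), and
`P_{2^{t+1}} + c = (P_{2^t} + a)(P_{2^t} + b)`. Dividing `q` by `P_{2^t}` and inducting on `t`,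
the sum of `q` over the roots of `P_{2^t} + c` is independent of `c ∈ [0, r_t]` when
`deg q < 2^t`. On the roots of `P_{2^k} + a` and of `P_{2^k} + b` the polynomial `T_k` takes the
opposite values `±(r_k/2 - a)`, so for `deg p < 2^k` the sum of `T_k p` over the roots of
`P_{2^u} + c` vanishes for every `u > k`. In the limit `∫ T_k p dμ = 0`, hence `T_k = Q_{2^k}` by
uniqueness of monic orthogonal polynomials, and the recursion is the identity
`T_{k+1} = T_k² - (1 - 2γ_{k+1}) r_k²/4`.
-/

section RootSum

variable {R : Type*} [CommRing R] [IsDomain R]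

noncomputable def rootSum (f q : R[X]) : R :=
  (f.roots.map fun x => q.eval x).sum

theorem rootSum_add (f q q' : R[X]) : rootSum f (q + q') = rootSum f q + rootSum f q' := by
  simp only [rootSum, eval_add, Multiset.sum_map_add]

theorem rootSum_C_mul (f q : R[X]) (c : R) : rootSum f (C c * q) = c * rootSum f q := by
  simp only [rootSum, eval_mul, eval_C, Multiset.sum_map_mul_left]

theorem rootSum_mul {f g : R[X]} (hfg : f * g ≠ 0) (q : R[X]) :
    rootSum (f * g) q = rootSum f q + rootSum g q := by
  simp only [rootSum, roots_mul hfg, Multiset.map_add, Multiset.sum_add]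

theorem rootSum_add_C_self_mul (f q : R[X]) (a : R) :
    rootSum (f + C a) (f * q) = -a * rootSum (f + C a) q := by
  rw [rootSum, rootSum, ← Multiset.sum_map_mul_left]
  refine congrArg Multiset.sum (Multiset.map_congr rfl fun x hx => ?_)
  have hroot : f.eval x + a = 0 := by simpa using isRoot_of_mem_roots hx
  rw [eval_mul, show f.eval x = -a by linear_combination hroot]

end RootSum

theorem exists_add_eq_mul_eq {s c : ℝ} (hs : 0 ≤ s) (hc : 0 ≤ c) (h : 4 * c ≤ s ^ 2) :
    ∃ a b, a ∈ Icc 0 s ∧ b ∈ Icc 0 s ∧ a + b = s ∧ a * b = c := by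
  have hd : 0 ≤ s ^ 2 - 4 * c := by linarith
  have hsq := Real.sq_sqrt hd
  have hle : √(s ^ 2 - 4 * c) ≤ s := Real.sqrt_le_iff.mpr ⟨hs, by linarith⟩
  have hnn := Real.sqrt_nonneg (s ^ 2 - 4 * c)
  refine ⟨(s - √(s ^ 2 - 4 * c)) / 2, (s + √(s ^ 2 - 4 * c)) / 2,
    ⟨by linarith, by linarith⟩, ⟨by linarith, by linarith⟩, by ring, ?_⟩
  linear_combination (-1 / 4 : ℝ) * hsq

theorem eq_of_isMonicOfDegree_of_orthogonal {μ : Measure ℝ}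
    (hμint : ∀ p : ℝ[X], Integrable (fun x => p.eval x) μ)
    (hμpos : ∀ p : ℝ[X], p ≠ 0 → 0 < ∫ x, (p.eval x) ^ 2 ∂μ) {n : ℕ} {Q R : ℝ[X]}
    (hQ : IsMonicOfDegree Q n) (hR : IsMonicOfDegree R n)
    (hQorth : ∀ p : ℝ[X], p.natDegree < n → ∫ x, Q.eval x * p.eval x ∂μ = 0)
    (hRorth : ∀ p : ℝ[X], p.natDegree < n → ∫ x, R.eval x * p.eval x ∂μ = 0) :
    Q = R := by
  by_contra hne
  have hn : n ≠ 0 := by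
    rintro rfl
    exact hne ((isMonicOfDegree_zero_iff.mp hQ).trans (isMonicOfDegree_zero_iff.mp hR).symm)
  have hdeg := hQ.natDegree_sub_lt hn hR
  have hsq : ∫ x, ((Q - R).eval x) ^ 2 ∂μ = 0 :=
    calc ∫ x, ((Q - R).eval x) ^ 2 ∂μ
        = ∫ x, (Q * (Q - R)).eval x - (R * (Q - R)).eval x ∂μ := by
          congr 1 with x
          simp only [eval_mul, eval_sub]
          ring
      _ = ∫ x, Q.eval x * (Q - R).eval x ∂μ - ∫ x, R.eval x * (Q - R).eval x ∂μ := by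
          rw [integral_sub (hμint _) (hμint _)]
          simp only [eval_mul]
      _ = 0 := by rw [hQorth _ hdeg, hRorth _ hdeg, sub_zero]
  exact (hμpos _ (sub_ne_zero.mpr hne)).ne' hsq

section CantorPolynomials

variable {γ : ℕ → ℝ}

theorem r_nonneg (hγ : ∀ s, 0 ≤ γ (s + 1)) : ∀ t, 0 ≤ r γ t
  | 0 => zero_le_one
  | t + 1 => mul_nonneg (hγ t) (sq_nonneg _)

theorem four_mul_r_succ_le (hγ : ∀ s, γ (s + 1) ≤ 1 / 4) (t : ℕ) :
    4 * r γ (t + 1) ≤ r γ t ^ 2 := by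
  show 4 * (γ (t + 1) * r γ t ^ 2) ≤ r γ t ^ 2
  nlinarith [hγ t, sq_nonneg (r γ t)]

variable (γ) in
theorem isMonicOfDegree_P : ∀ t, IsMonicOfDegree (P γ t) (2 ^ t)
  | 0 => by simpa only [P, C_1, pow_zero] using isMonicOfDegree_X_sub_one (1 : ℝ)
  | t + 1 => by
    have hP := isMonicOfDegree_P t
    rw [pow_succ, mul_two]
    exact hP.mul (hP.add_right (by rw [natDegree_C]; positivity))

variable (γ) in
theorem isMonicOfDegree_P_add_C (t : ℕ) (c : ℝ) : IsMonicOfDegree (P γ t + C c) (2 ^ t) :=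
  (isMonicOfDegree_P γ t).add_right (by rw [natDegree_C]; positivity)

theorem P_succ_add_C_mul (t : ℕ) {a b : ℝ} (hab : a + b = r γ t) :
    P γ (t + 1) + C (a * b) = (P γ t + C a) * (P γ t + C b) := by
  show P γ t * (P γ t + C (r γ t)) + C (a * b) = _
  rw [← hab, C_add, C_mul]
  ring

variable (γ) in
theorem P_succ_add_C_half (t : ℕ) :
    P γ (t + 1) + C (r γ (t + 1) / 2) =
      (P γ t + C (r γ t / 2)) ^ 2 - C ((1 - 2 * γ (t + 1)) * r γ t ^ 2 / 4) := by
  show P γ t * (P γ t + C (r γ t)) + C (γ (t + 1) * r γ t ^ 2 / 2) = _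
  have hr : C (r γ t) = 2 * C (r γ t / 2) := by
    rw [← C_ofNat, ← C_mul]
    ring_nf
  have hγr : C (γ (t + 1) * r γ t ^ 2 / 2) =
      C (r γ t / 2) ^ 2 - C ((1 - 2 * γ (t + 1)) * r γ t ^ 2 / 4) := by
    rw [← C_pow, ← C_sub]
    ring_nf
  rw [hr, hγr]
  ring

variable (hγ : ∀ s, γ (s + 1) ∈ Icc (0 : ℝ) (1 / 4))
include hγ

theorem exists_rootSum_P_succ_add_C {t : ℕ} {c : ℝ} (hc : c ∈ Icc 0 (r γ (t + 1))) :
    ∃ a b, a ∈ Icc 0 (r γ t) ∧ b ∈ Icc 0 (r γ t) ∧ a + b = r γ t ∧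
      ∀ q, rootSum (P γ (t + 1) + C c) q = rootSum (P γ t + C a) q + rootSum (P γ t + C b) q := by
  have h4c : 4 * c ≤ r γ t ^ 2 :=
    (mul_le_mul_of_nonneg_left hc.2 (by norm_num)).trans (four_mul_r_succ_le (fun s => (hγ s).2) t)
  obtain ⟨a, b, ha, hb, hab, rfl⟩ :=
    exists_add_eq_mul_eq (r_nonneg (fun s => (hγ s).1) t) hc.1 h4c
  refine ⟨a, b, ha, hb, hab, fun q => ?_⟩
  rw [P_succ_add_C_mul t hab, rootSum_mul (mul_ne_zero (isMonicOfDegree_P_add_C γ t a).ne_zero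
    (isMonicOfDegree_P_add_C γ t b).ne_zero)]

theorem rootSum_P_add_C_eq (t : ℕ) {c c' : ℝ} (hc : c ∈ Icc 0 (r γ t))
    (hc' : c' ∈ Icc 0 (r γ t)) {q : ℝ[X]} (hq : q.natDegree < 2 ^ t) :
    rootSum (P γ t + C c) q = rootSum (P γ t + C c') q := by
  induction t generalizing c c' q with
  | zero =>
    have hX : ∀ c, P γ 0 + C c = X - C (1 - c) := fun c => by
      show X - 1 + C c = _
      rw [C_sub, C_1]
      ring
    rw [hX, hX, eq_C_of_natDegree_eq_zero (by omega : q.natDegree = 0)]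
    simp only [rootSum, roots_X_sub_C, Multiset.map_singleton, Multiset.sum_singleton, eval_C]
  | succ t ih =>
    have hP := isMonicOfDegree_P γ t
    obtain ⟨A, B, hqAB, hA, hB⟩ : ∃ A B : ℝ[X], q = P γ t * A + B ∧
        A.natDegree < 2 ^ t ∧ B.natDegree < 2 ^ t := by
      refine ⟨q /ₘ P γ t, q %ₘ P γ t, by rw [add_comm, modByMonic_add_div], ?_, ?_⟩
      · rw [natDegree_divByMonic q hP.monic, hP.natDegree_eq]
        rw [pow_succ] at hq
        omega
      · refine hP.natDegree_eq ▸ natDegree_modByMonic_lt q hP.monic fun h1 => ?_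
        exact (pow_pos two_pos t).ne (by simpa [h1] using hP.natDegree_eq)
    have h0 : (0 : ℝ) ∈ Icc 0 (r γ t) := ⟨le_rfl, r_nonneg (fun s => (hγ s).1) t⟩
    have hlevel : ∀ c ∈ Icc 0 (r γ (t + 1)),
        rootSum (P γ (t + 1) + C c) q = -r γ t * rootSum (P γ t + C 0) A
          + 2 * rootSum (P γ t + C 0) B := by
      intro c hc
      obtain ⟨a, b, ha, hb, hab, hsplit⟩ := exists_rootSum_P_succ_add_C hγ hc
      rw [hsplit, hqAB, rootSum_add, rootSum_add, rootSum_add_C_self_mul, rootSum_add_C_self_mul,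
        ih ha h0 hA, ih hb h0 hA, ih ha h0 hB, ih hb h0 hB, ← hab]
      ring
    rw [hlevel c hc, hlevel c' hc']

theorem rootSum_P_add_C_mul_eq_zero {k : ℕ} {p : ℝ[X]} (hp : p.natDegree < 2 ^ k) {u : ℕ}
    (hu : k + 1 ≤ u) {c : ℝ} (hc : c ∈ Icc 0 (r γ u)) :
    rootSum (P γ u + C c) ((P γ k + C (r γ k / 2)) * p) = 0 := by
  induction u, hu using Nat.le_induction generalizing c with
  | base =>
    obtain ⟨a, b, ha, hb, hab, hsplit⟩ := exists_rootSum_P_succ_add_C hγ hc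
    have hfiber : ∀ y, rootSum (P γ k + C y) ((P γ k + C (r γ k / 2)) * p) =
        (r γ k / 2 - y) * rootSum (P γ k + C y) p := fun y => by
      rw [add_mul, rootSum_add, rootSum_add_C_self_mul, rootSum_C_mul]
      ring
    rw [hsplit, hfiber, hfiber, rootSum_P_add_C_eq hγ k ha hb hp, ← hab]
    ring
  | succ u _ ih =>
    obtain ⟨a, b, ha, hb, -, hsplit⟩ := exists_rootSum_P_succ_add_C hγ hc
    rw [hsplit, ih ha, ih hb, add_zero]

theorem integral_P_add_C_half_mul_eq_zero {μ : Measure ℝ}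
    (hμconv : ∀ p : ℝ[X],
      Tendsto (fun s => nuInt γ s (fun x => p.eval x)) atTop (nhds (∫ x, p.eval x ∂μ)))
    {k : ℕ} {p : ℝ[X]} (hp : p.natDegree < 2 ^ k) :
    ∫ x, (P γ k + C (r γ k / 2)).eval x * p.eval x ∂μ = 0 := by
  have hzero : Tendsto (fun u => nuInt γ u fun x => ((P γ k + C (r γ k / 2)) * p).eval x)
      atTop (nhds 0) := by
    refine tendsto_const_nhds.congr' ?_
    filter_upwards [eventually_ge_atTop (k + 1)] with u hu
    have hc : r γ u / 2 ∈ Icc 0 (r γ u) := by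
      have := r_nonneg (fun s => (hγ s).1) u
      constructor <;> linarith
    show 0 = rootSum (P γ u + C (r γ u / 2)) ((P γ k + C (r γ k / 2)) * p) / 2 ^ u
    rw [rootSum_P_add_C_mul_eq_zero hγ hp hu hc, zero_div]
  simpa only [eval_mul] using tendsto_nhds_unique (hμconv _) hzero

end CantorPolynomials

theorem stmt_5_general (γ : ℕ → ℝ) (hγ : ∀ s : ℕ, 0 < γ (s + 1) ∧ γ (s + 1) < 1 / 4)
    (μ : Measure ℝ)
    (hμint : ∀ p : Polynomial ℝ, Integrable (fun x => p.eval x) μ)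
    (hμpos : ∀ p : Polynomial ℝ, p ≠ 0 → 0 < ∫ x, (p.eval x) ^ 2 ∂μ)
    (hμconv : ∀ p : Polynomial ℝ,
      Tendsto (fun s => nuInt γ s (fun x => p.eval x)) atTop (nhds (∫ x, p.eval x ∂μ)))
    (Q : ℕ → Polynomial ℝ) (hQmonic : ∀ n, (Q n).Monic) (hQdeg : ∀ n, (Q n).natDegree = n)
    (hQorth : ∀ n : ℕ, ∀ p : Polynomial ℝ, p.degree < (n : WithBot ℕ) →
      ∫ x, (Q n).eval x * p.eval x ∂μ = 0)
    (s : ℕ) :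
    Q (2 ^ (s + 1)) = (Q (2 ^ s)) ^ 2 - C ((1 - 2 * γ (s + 1)) * (r γ s) ^ 2 / 4) := by
  have hγ' : ∀ s, γ (s + 1) ∈ Icc (0 : ℝ) (1 / 4) := fun s => ⟨(hγ s).1.le, (hγ s).2.le⟩
  have hQ : ∀ k, Q (2 ^ k) = P γ k + C (r γ k / 2) := fun k =>
    eq_of_isMonicOfDegree_of_orthogonal hμint hμpos ⟨hQdeg _, hQmonic _⟩
      (isMonicOfDegree_P_add_C γ k _)
      (fun p hp => hQorth _ p (degree_le_natDegree.trans_lt (by exact_mod_cast hp)))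
      (fun p hp => integral_P_add_C_half_mul_eq_zero hγ' hμconv hp)
  rw [hQ, hQ, P_succ_add_C_half]

theorem stmt_5 (γ : ℕ → ℝ) (hγ : ∀ s : ℕ, 0 < γ (s + 1) ∧ γ (s + 1) < 1 / 4)
    (μ : Measure ℝ) [IsProbabilityMeasure μ]
    (hμint : ∀ p : Polynomial ℝ, Integrable (fun x => p.eval x) μ)
    (hμpos : ∀ p : Polynomial ℝ, p ≠ 0 → 0 < ∫ x, (p.eval x) ^ 2 ∂μ)
    (hμconv : ∀ p : Polynomial ℝ,
      Tendsto (fun s => nuInt γ s (fun x => p.eval x)) atTop (nhds (∫ x, p.eval x ∂μ)))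
    (Q : ℕ → Polynomial ℝ) (hQmonic : ∀ n, (Q n).Monic) (hQdeg : ∀ n, (Q n).natDegree = n)
    (hQorth : ∀ n : ℕ, ∀ p : Polynomial ℝ, p.degree < (n : WithBot ℕ) →
      ∫ x, (Q n).eval x * p.eval x ∂μ = 0)
    (s : ℕ) :
    Q (2 ^ (s + 1)) = (Q (2 ^ s)) ^ 2 - C ((1 - 2 * γ (s + 1)) * (r γ s) ^ 2 / 4) :=
  stmt_5_general γ hγ μ hμint hμpos hμconv Q hQmonic hQdeg hQorth s
end
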